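/- For any spider graph S_{1,n,n} on 2n+1 vertices with n ≥ 3, γ_tc(M(S_{1,n,n})) = 2n + 2. -/

import Mathlib

open SimpleGraph

/-- The middle graph `M(G)`: vertices are `V(G) ⊕ E(G)`; an edge-vertex is adjacent to
another edge-vertex iff the edges are distinct and share an endpoint, and a vertex is
adjacent to an edge iff it is incident to it. -/
def middleGraph {V : Type*} (G : SimpleGraph V) : SimpleGraph (V ⊕ G.edgeSet) where
  Adj x y :=
    match x, y with
    | Sum.inl _, Sum.inl _ => False
    | Sum.inl v, Sum.inr e => v ∈ (e : Sym2 V)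
    | Sum.inr e, Sum.inl v => v ∈ (e : Sym2 V)
    | Sum.inr e, Sum.inr f => e ≠ f ∧ ∃ v, v ∈ (e : Sym2 V) ∧ v ∈ (f : Sym2 V)
  symm := by
    constructor
    rintro (v|e) (w|f) h
    · exact h
    · exact h
    · exact h
    · exact ⟨h.1.symm, h.2.imp fun v hv => ⟨hv.2, hv.1⟩⟩
  loopless := by
    constructor
    rintro (v|e) h
    · exact h
    · exact h.1 rfl

/-- `D` is a total dominating set of `G`: every vertex has a neighbour in `D`. -/
def IsTotalDomSet {V : Type*} (G : SimpleGraph V) (D : Set V) : Prop :=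
  ∀ v : V, ∃ u ∈ D, G.Adj v u

/-- `D` is a total outer-connected dominating set of `G`: it is total dominating and
the subgraph induced on the complement of `D` is connected. -/
def IsTOCDomSet {V : Type*} (G : SimpleGraph V) (D : Set V) : Prop :=
  IsTotalDomSet G D ∧ (G.induce Dᶜ).Connected

/-- The total domination number `γₜ(G)`. -/
noncomputable def totalDomNum {V : Type*} (G : SimpleGraph V) : ℕ :=
  sInf {k | ∃ D : Set V, IsTotalDomSet G D ∧ D.ncard = k}

/-- The total outer-connected domination number `γ_tc(G)`. -/
noncomputable def tocDomNum {V : Type*} (G : SimpleGraph V) : ℕ :=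
  sInf {k | ∃ D : Set V, IsTOCDomSet G D ∧ D.ncard = k}

/-- The set of leaves (vertices of degree 1) of `G`. -/
def leafSet {V : Type*} (G : SimpleGraph V) : Set V :=
  {v | ∃ u, G.neighborSet v = {u}}

/-- The wheel graph with hub `none` and rim cycle on `Fin n`. -/
def wheelGraph (n : ℕ) : SimpleGraph (Option (Fin n)) where
  Adj x y :=
    match x, y with
    | none, none => False
    | none, some _ => True
    | some _, none => True
    | some i, some j => (SimpleGraph.cycleGraph n).Adj i j
  symm := by
    constructor
    rintro (_|i) (_|j) h
    · exact h
    · exact h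
    · exact h
    · exact (SimpleGraph.cycleGraph n).adj_symm h
  loopless := by
    constructor
    rintro (_|i) h
    · exact h
    · exact (SimpleGraph.cycleGraph n).loopless.irrefl i h

/-- The corona `G ∘ K₁`: to each vertex `a` of `G` (copy `Sum.inl a`) a pendant
vertex `Sum.inr a` is attached. -/
def corona {V : Type*} (G : SimpleGraph V) : SimpleGraph (V ⊕ V) where
  Adj x y :=
    match x, y with
    | Sum.inl a, Sum.inl b => G.Adj a b
    | Sum.inl a, Sum.inr b => a = b
    | Sum.inr a, Sum.inl b => a = b
    | Sum.inr _, Sum.inr _ => False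
  symm := by
    constructor
    rintro (a|a) (b|b) h
    · exact G.adj_symm h
    · exact h.symm
    · exact h.symm
    · exact h
  loopless := by
    constructor
    rintro (a|a) h
    · exact G.loopless.irrefl a h
    · exact h

/-- The 2-corona `G ∘ P₂`: to each vertex `a` of `G` (copy `Sum.inl a`) a path
`Sum.inl a — Sum.inr (Sum.inl a) — Sum.inr (Sum.inr a)` of length 2 is attached. -/
def corona2 {V : Type*} (G : SimpleGraph V) : SimpleGraph (V ⊕ V ⊕ V) where
  Adj x y :=
    match x, y with
    | Sum.inl a, Sum.inl b => G.Adj a b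
    | Sum.inl a, Sum.inr (Sum.inl b) => a = b
    | Sum.inr (Sum.inl a), Sum.inl b => a = b
    | Sum.inr (Sum.inl a), Sum.inr (Sum.inr b) => a = b
    | Sum.inr (Sum.inr a), Sum.inr (Sum.inl b) => a = b
    | _, _ => False
  symm := by
    constructor
    rintro (a|a|a) (b|b|b) h <;> first | exact G.adj_symm h | exact h.symm | exact h
  loopless := by
    constructor
    rintro (a|a|a) h
    · exact G.loopless.irrefl a h
    · exact h
    · exact h

/-- The spider `S_{1,n,n}`: hub `none`, middle vertices `some (.inl i)`,
leaves `some (.inr i)`; the star `K_{1,n}` with every edge subdivided once. -/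
def spiderGraph (n : ℕ) : SimpleGraph (Option (Fin n ⊕ Fin n)) where
  Adj x y :=
    match x, y with
    | none, some (Sum.inl _) => True
    | some (Sum.inl _), none => True
    | some (Sum.inl i), some (Sum.inr j) => i = j
    | some (Sum.inr i), some (Sum.inl j) => i = j
    | _, _ => False
  symm := by
    constructor
    rintro (_|i|i) (_|j|j) h <;> first | exact h.symm | exact h
  loopless := by
    constructor
    rintro (_|i|i) h <;> exact h

/-- The friendship graph `Fₙ`: `n` triangles sharing the common vertex `none`. -/
def friendshipGraph (n : ℕ) : SimpleGraph (Option (Fin n × Fin 2)) where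
  Adj x y :=
    match x, y with
    | none, some _ => True
    | some _, none => True
    | some (i, a), some (j, b) => i = j ∧ a ≠ b
    | none, none => False
  symm := by
    constructor
    rintro (_|⟨i,a⟩) (_|⟨j,b⟩) h <;> first | exact ⟨h.1.symm, h.2.symm⟩ | exact h
  loopless := by
    constructor
    rintro (_|⟨i,a⟩) h
    · exact h
    · exact h.2 rfl

/-!
In `M(S_{1,n,n})` the only neighbour of a leaf `l_i` is the edge-vertex `m_i l_i`, and the only
neighbours of a middle vertex `m_i` are the edge-vertices `h m_i` and `m_i l_i`. Hence a total
outer-connected dominating set `D` contains every `m_i l_i`, then every `l_i` (otherwise `l_i`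
would be isolated in the complement), and some `h m_k` (to dominate the hub `h`), then `m_k`
too; the only escape is a one-vertex complement, but then `|D| = 4n`. These `2n + 2` vertices,
for a fixed `k`, already form such a set: its complement is the star around `h` formed by the
`h m_i` and `m_i`, `i ≠ k`.
-/

open Sum Set

namespace SimpleGraph

variable {V : Type*}

theorem Preconnected.mem_of_neighborSet_subset {G : SimpleGraph V} {D : Set V}
    (h : (G.induce Dᶜ).Preconnected) (hD : Dᶜ.Nontrivial) {v : V}
    (hv : G.neighborSet v ⊆ D) : v ∈ D := by
  by_contra hvD
  obtain ⟨w, hw, hwv⟩ := hD.exists_ne v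
  obtain ⟨p⟩ := h ⟨v, hvD⟩ ⟨w, hw⟩
  cases p with
  | nil => exact hwv rfl
  | @cons _ u _ hadj _ => exact u.2 (hv hadj)

end SimpleGraph

section MiddleGraph

variable {V : Type*} {G : SimpleGraph V}

@[simp]
theorem middleGraph_adj_inl_inl {v w : V} : ¬(middleGraph G).Adj (inl v) (inl w) :=
  id

@[simp]
theorem middleGraph_adj_inl_inr {v : V} {e : G.edgeSet} :
    (middleGraph G).Adj (inl v) (inr e) ↔ v ∈ (e : Sym2 V) :=
  Iff.rfl

@[simp]
theorem middleGraph_adj_inr_inl {v : V} {e : G.edgeSet} :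
    (middleGraph G).Adj (inr e) (inl v) ↔ v ∈ (e : Sym2 V) :=
  Iff.rfl

@[simp]
theorem middleGraph_adj_inr_inr {e f : G.edgeSet} :
    (middleGraph G).Adj (inr e) (inr f) ↔
      e ≠ f ∧ ∃ v, v ∈ (e : Sym2 V) ∧ v ∈ (f : Sym2 V) :=
  Iff.rfl

end MiddleGraph

namespace spiderGraph

variable {n : ℕ}

def innerEdge (i : Fin n) : (spiderGraph n).edgeSet :=
  ⟨s(none, some (inl i)), (mem_edgeSet _).2 trivial⟩

def outerEdge (i : Fin n) : (spiderGraph n).edgeSet :=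
  ⟨s(some (inl i), some (inr i)), (mem_edgeSet _).2 rfl⟩

theorem edge_cases (e : (spiderGraph n).edgeSet) :
    (∃ i, e = innerEdge i) ∨ ∃ i, e = outerEdge i := by
  obtain ⟨e, he⟩ := e
  induction e using Sym2.ind with
  | _ a b =>
    rw [mem_edgeSet] at he
    rcases a with _ | i | i <;> rcases b with _ | j | j <;> cases he
    · exact .inl ⟨j, rfl⟩
    · exact .inl ⟨i, Subtype.ext Sym2.eq_swap⟩
    · exact .inr ⟨i, rfl⟩
    · exact .inr ⟨i, Subtype.ext Sym2.eq_swap⟩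

@[simp]
theorem innerEdge_inj {i j : Fin n} : innerEdge i = innerEdge j ↔ i = j := by
  simp [innerEdge, Subtype.ext_iff]

@[simp]
theorem outerEdge_inj {i j : Fin n} : outerEdge i = outerEdge j ↔ i = j := by
  simp [outerEdge, Subtype.ext_iff]

@[simp]
theorem innerEdge_ne_outerEdge (i j : Fin n) : innerEdge i ≠ outerEdge j := by
  simp [innerEdge, outerEdge, Subtype.ext_iff]

@[simp]
theorem outerEdge_ne_innerEdge (i j : Fin n) : outerEdge i ≠ innerEdge j :=
  (innerEdge_ne_outerEdge j i).symm

@[simp]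
theorem mem_innerEdge {v : Option (Fin n ⊕ Fin n)} {i : Fin n} :
    v ∈ (innerEdge i : Sym2 _) ↔ v = none ∨ v = some (inl i) :=
  Sym2.mem_iff

@[simp]
theorem mem_outerEdge {v : Option (Fin n ⊕ Fin n)} {i : Fin n} :
    v ∈ (outerEdge i : Sym2 _) ↔ v = some (inl i) ∨ v = some (inr i) :=
  Sym2.mem_iff

theorem none_mem_iff {e : (spiderGraph n).edgeSet} :
    (none : Option (Fin n ⊕ Fin n)) ∈ (e : Sym2 _) ↔ ∃ i, e = innerEdge i := by
  rcases edge_cases e with ⟨i, rfl⟩ | ⟨i, rfl⟩ <;> simp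

theorem some_inl_mem_iff {e : (spiderGraph n).edgeSet} {j : Fin n} :
    (some (inl j) : Option (Fin n ⊕ Fin n)) ∈ (e : Sym2 _) ↔
      e = innerEdge j ∨ e = outerEdge j := by
  rcases edge_cases e with ⟨i, rfl⟩ | ⟨i, rfl⟩ <;> simp [eq_comm]

theorem some_inr_mem_iff {e : (spiderGraph n).edgeSet} {j : Fin n} :
    (some (inr j) : Option (Fin n ⊕ Fin n)) ∈ (e : Sym2 _) ↔ e = outerEdge j := by
  rcases edge_cases e with ⟨i, rfl⟩ | ⟨i, rfl⟩ <;> simp [eq_comm]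

noncomputable def edgeEquiv : Fin n ⊕ Fin n ≃ (spiderGraph n).edgeSet :=
  Equiv.ofBijective (Sum.elim innerEdge outerEdge) <| by
    refine ⟨?_, fun e => ?_⟩
    · rintro (i | i) (j | j) h <;> simp_all
    · rcases edge_cases e with ⟨i, rfl⟩ | ⟨i, rfl⟩
      exacts [⟨inl i, rfl⟩, ⟨inr i, rfl⟩]

theorem middleGraph_neighborSet_leaf (j : Fin n) :
    (middleGraph (spiderGraph n)).neighborSet (inl (some (inr j))) = {inr (outerEdge j)} := by
  ext (v | e) <;> simp [some_inr_mem_iff]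

theorem middleGraph_neighborSet_mid (j : Fin n) :
    (middleGraph (spiderGraph n)).neighborSet (inl (some (inl j))) =
      {inr (innerEdge j), inr (outerEdge j)} := by
  ext (v | e) <;> simp [some_inl_mem_iff]

theorem middleGraph_adj_hub {x : Option (Fin n ⊕ Fin n) ⊕ (spiderGraph n).edgeSet} :
    (middleGraph (spiderGraph n)).Adj (inl none) x ↔ ∃ i, x = inr (innerEdge i) := by
  rcases x with v | e <;> simp [none_mem_iff]

theorem card_middleGraph_vertices :
    Nat.card (Option (Fin n ⊕ Fin n) ⊕ (spiderGraph n).edgeSet) = 4 * n + 1 := by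
  rw [Nat.card_sum, ← Nat.card_congr edgeEquiv]
  simp only [Nat.card_eq_fintype_card, Fintype.card_option, Fintype.card_sum, Fintype.card_fin]
  omega

def coreSet (k : Fin n) : Set (Option (Fin n ⊕ Fin n) ⊕ (spiderGraph n).edgeSet) :=
  insert (inl (some (inl k))) <| insert (inr (innerEdge k)) <|
    range (inl ∘ some ∘ inr) ∪ range (inr ∘ outerEdge)

theorem ncard_coreSet (k : Fin n) : (coreSet k).ncard = 2 * n + 2 := by
  rw [coreSet, ncard_insert_of_notMem, ncard_insert_of_notMem, ncard_union_eq,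
    ncard_range_of_injective, ncard_range_of_injective]
  · simp only [Nat.card_eq_fintype_card, Fintype.card_fin]; ring
  · exact inr_injective.comp fun _ _ => outerEdge_inj.1
  · exact inl_injective.comp <| (Option.some_injective _).comp inr_injective
  · simp [Set.disjoint_left]
  · simp
  · simp

theorem isTOCDomSet_coreSet (k : Fin n) :
    IsTOCDomSet (middleGraph (spiderGraph n)) (coreSet k) := by
  refine ⟨?_, ?_⟩
  · rintro ((_ | i | i) | e)
    · exact ⟨inr (innerEdge k), by simp [coreSet], by simp⟩
    · exact ⟨inr (outerEdge i), by simp [coreSet], by simp⟩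
    · exact ⟨inr (outerEdge i), by simp [coreSet], by simp⟩
    · rcases edge_cases e with ⟨i, rfl⟩ | ⟨i, rfl⟩
      · exact ⟨inr (outerEdge i), by simp [coreSet], by simp⟩
      · exact ⟨inl (some (inr i)), by simp [coreSet], by simp⟩
  · set H := (middleGraph (spiderGraph n)).induce (coreSet k)ᶜ
    have hhub : inl none ∈ (coreSet k)ᶜ := by simp [coreSet]
    refine (connected_iff_exists_forall_reachable _).2 ⟨⟨_, hhub⟩, ?_⟩
    rintro ⟨(_ | i | i) | e, hx⟩
    · rfl
    · have hik : i ≠ k := by rintro rfl; simp [coreSet] at hx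
      have hinner : inr (innerEdge i) ∈ (coreSet k)ᶜ := by simp [coreSet, hik]
      have h₁ : H.Adj ⟨_, hhub⟩ ⟨_, hinner⟩ := induce_adj.2 (by simp)
      have h₂ : H.Adj ⟨_, hinner⟩ ⟨_, hx⟩ := induce_adj.2 (by simp)
      exact h₁.reachable.trans h₂.reachable
    · simp [coreSet] at hx
    · rcases edge_cases e with ⟨i, rfl⟩ | ⟨i, rfl⟩
      · exact Adj.reachable (induce_adj.2 (by simp))
      · simp [coreSet] at hx

variable {E : Set (Option (Fin n ⊕ Fin n) ⊕ (spiderGraph n).edgeSet)}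

theorem outerEdge_mem (hE : IsTotalDomSet (middleGraph (spiderGraph n)) E) (j : Fin n) :
    inr (outerEdge j) ∈ E := by
  obtain ⟨u, hu, hadj⟩ := hE (inl (some (inr j)))
  rw [← mem_neighborSet, middleGraph_neighborSet_leaf, mem_singleton_iff] at hadj
  exact hadj ▸ hu

theorem exists_innerEdge_mem (hE : IsTotalDomSet (middleGraph (spiderGraph n)) E) :
    ∃ k, inr (innerEdge k) ∈ E := by
  obtain ⟨u, hu, hadj⟩ := hE (inl none)
  obtain ⟨k, rfl⟩ := middleGraph_adj_hub.1 hadj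
  exact ⟨k, hu⟩

theorem coreSet_subset (hE : IsTOCDomSet (middleGraph (spiderGraph n)) E) (hE' : Eᶜ.Nontrivial)
    {k : Fin n} (hk : inr (innerEdge k) ∈ E) : coreSet k ⊆ E := by
  have hleaf (j : Fin n) : inl (some (inr j)) ∈ E := by
    refine hE.2.preconnected.mem_of_neighborSet_subset hE' ?_
    simpa [middleGraph_neighborSet_leaf] using outerEdge_mem hE.1 j
  have hmid : inl (some (inl k)) ∈ E := by
    refine hE.2.preconnected.mem_of_neighborSet_subset hE' ?_
    simpa [middleGraph_neighborSet_mid, insert_subset_iff] using ⟨hk, outerEdge_mem hE.1 k⟩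
  simp only [coreSet, insert_subset_iff, union_subset_iff, range_subset_iff]
  exact ⟨hmid, hk, hleaf, outerEdge_mem hE.1⟩

theorem le_ncard_of_isTOCDomSet (hE : IsTOCDomSet (middleGraph (spiderGraph n)) E) :
    2 * n + 2 ≤ E.ncard := by
  obtain ⟨k, hk⟩ := exists_innerEdge_mem hE.1
  rcases Eᶜ.subsingleton_or_nontrivial with hE' | hE'
  · have hcard := ncard_add_ncard_compl E
    rw [card_middleGraph_vertices] at hcard
    have hcompl := ncard_le_one_iff_subsingleton.2 hE'
    have hn := k.pos
    omega
  · exact ncard_coreSet k ▸ ncard_le_ncard (coreSet_subset hE hE' hk)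

end spiderGraph

theorem stmt17 (n : ℕ) (hn : 3 ≤ n) :
    tocDomNum (middleGraph (spiderGraph n)) = 2 * n + 2 :=
  IsLeast.csInf_eq
    ⟨⟨spiderGraph.coreSet ⟨0, by omega⟩, spiderGraph.isTOCDomSet_coreSet _,
        spiderGraph.ncard_coreSet _⟩,
      by rintro _ ⟨E, hE, rfl⟩; exact spiderGraph.le_ncard_of_isTOCDomSet hE⟩
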